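/- arXiv:0901.1409 — 3 statements merged into one kernel-verified Lean document; each statement's English description precedes it below -/
import Mathlib

section
/- Let 𝔫 be a 2-step nilpotent Lie algebra with group N given by BCH multiplication x*y = x + y + (1/2)[x,y]. Let A ⊆ N be a finite symmetric set containing the identity with AA covered by k left translates of A. Then for the set log(A) = A (viewed as a subset of 𝔫), the sumset log(A) + log(A) satisfies |log(A) + log(A)| ≤ k^{L-1}|A| where L is an absolute constant (one may take L = 8): every element a + b with a, b ∈ A can be written as (1/2)·log of an element of A^8. -/
/-!
Since `𝔫` is 2-step nilpotent, the BCH product is associative and `(a, b) ↦ a * b - a - b` is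
bilinear, alternating and equal to `(1/2)⁅a, b⁆`. In the palindromic product `a * b * b * a` the
brackets `⁅a, b⁆` and `⁅b, a⁆` occur twice each and cancel, so `a * b * b * a = 2 • (a + b)`, an
element of `A⁴ ⊆ A⁸`; doubling is injective, so `|A + A| ≤ |A⁸|`. Covering `AA` by `k` left
translates `xᵢ A` and reassociating gives `A^(n+2) ⊆ ⋃ᵢ xᵢ A^(n+1)`, whence `|A^(n+1)| ≤ kⁿ |A|`.
-/

/-- The BCH product on a 2-step nilpotent Lie algebra: `x * y = x + y + (1/2)⁅x, y⁆`. -/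
def bchMul {L : Type*} [LieRing L] [LieAlgebra ℚ L] (x y : L) : L :=
  x + y + (2⁻¹ : ℚ) • ⁅x, y⁆

/-- The `l`-fold product set `A^l` with respect to the BCH product (`A^0 = {0}`,
`0` being the group identity). -/
def bchPow {L : Type*} [LieRing L] [LieAlgebra ℚ L] [DecidableEq L] :
    ℕ → Finset L → Finset L
  | 0, _ => {0}
  | n + 1, A => Finset.image₂ bchMul A (bchPow n A)

open Finset

theorem card_image₂_add_le_of_two_zsmul_mem {M : Type*} [AddCommGroup M] [IsAddTorsionFree M]
    [DecidableEq M] {A S : Finset M} (h : ∀ a ∈ A, ∀ b ∈ A, (2 : ℤ) • (a + b) ∈ S) :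
    (image₂ (· + ·) A A).card ≤ S.card := by
  refine card_le_card_of_injOn (fun s => (2 : ℤ) • s) ?_ fun s _ t _ hst => ?_
  · intro s hs
    obtain ⟨a, ha, b, hb, rfl⟩ := mem_image₂.1 hs
    exact h a ha b hb
  · exact (zsmul_right_inj two_ne_zero).1 hst

section BCH

variable {L : Type*} [LieRing L]

theorem lie_lie_eq_zero_of_two_step (h2 : ∀ x y z : L, ⁅x, ⁅y, z⁆⁆ = 0) (x y z : L) :
    ⁅⁅x, y⁆, z⁆ = 0 := by
  rw [← lie_skew, h2, neg_zero]

variable [LieAlgebra ℚ L]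

@[simp]
theorem bchMul_zero_left (a : L) : bchMul 0 a = a := by
  simp [bchMul]

@[simp]
theorem bchMul_zero_right (a : L) : bchMul a 0 = a := by
  simp [bchMul]

theorem bchMul_assoc (h2 : ∀ x y z : L, ⁅x, ⁅y, z⁆⁆ = 0) (a b c : L) :
    bchMul (bchMul a b) c = bchMul a (bchMul b c) := by
  simp only [bchMul, lie_add, add_lie, lie_smul, smul_lie, h2, lie_lie_eq_zero_of_two_step h2,
    smul_zero]
  module

theorem bchMul_palindrome (h2 : ∀ x y z : L, ⁅x, ⁅y, z⁆⁆ = 0) (a b : L) :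
    bchMul a (bchMul b (bchMul b a)) = (2 : ℤ) • (a + b) := by
  have hba : ⁅b, a⁆ = -⁅a, b⁆ := by rw [← lie_skew]
  simp only [bchMul, lie_add, lie_smul, h2, smul_zero, lie_self, lie_neg, lie_zero, neg_zero, hba]
  module

end BCH

section BCHPow

variable {L : Type*} [LieRing L] [LieAlgebra ℚ L] [DecidableEq L] {A : Finset L}

@[simp]
theorem bchPow_one : bchPow 1 A = A := by
  ext
  simp [bchPow]

theorem bchMul_mem_bchPow_succ {a p : L} {n : ℕ} (ha : a ∈ A) (hp : p ∈ bchPow n A) :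
    bchMul a p ∈ bchPow (n + 1) A :=
  mem_image₂_of_mem ha hp

theorem bchPow_mono (hA : (0 : L) ∈ A) {m n : ℕ} (hmn : m ≤ n) : bchPow m A ⊆ bchPow n A := by
  induction n, hmn using Nat.le_induction with
  | base => rfl
  | succ n _ ih =>
    intro p hp
    simpa using bchMul_mem_bchPow_succ hA (ih hp)

theorem two_zsmul_add_mem_bchPow_four (h2 : ∀ x y z : L, ⁅x, ⁅y, z⁆⁆ = 0) {a b : L}
    (ha : a ∈ A) (hb : b ∈ A) : (2 : ℤ) • (a + b) ∈ bchPow 4 A := by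
  rw [← bchMul_palindrome h2]
  refine bchMul_mem_bchPow_succ ha (bchMul_mem_bchPow_succ hb (bchMul_mem_bchPow_succ hb ?_))
  rwa [bchPow_one]

variable {ι : Type*} [Fintype ι] {x : ι → L}

theorem bchPow_succ_succ_subset (h2 : ∀ x y z : L, ⁅x, ⁅y, z⁆⁆ = 0)
    (hcov : ∀ p ∈ image₂ bchMul A A, ∃ i, ∃ a ∈ A, p = bchMul (x i) a) (n : ℕ) :
    bchPow (n + 2) A ⊆ univ.biUnion fun i => (bchPow (n + 1) A).image (bchMul (x i)) := by
  intro p hp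
  obtain ⟨a, ha, q, hq, rfl⟩ := mem_image₂.1 hp
  obtain ⟨b, hb, r, hr, rfl⟩ := mem_image₂.1 hq
  obtain ⟨i, c, hc, hab⟩ := hcov (bchMul a b) (mem_image₂_of_mem ha hb)
  refine mem_biUnion.2 ⟨i, mem_univ i, mem_image.2 ⟨bchMul c r, mem_image₂_of_mem hc hr, ?_⟩⟩
  rw [← bchMul_assoc h2, ← hab, bchMul_assoc h2]

theorem card_bchPow_succ_le (h2 : ∀ x y z : L, ⁅x, ⁅y, z⁆⁆ = 0)
    (hcov : ∀ p ∈ image₂ bchMul A A, ∃ i, ∃ a ∈ A, p = bchMul (x i) a) (n : ℕ) :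
    (bchPow (n + 1) A).card ≤ Fintype.card ι ^ n * A.card := by
  induction n with
  | zero => simp [bchPow]
  | succ n ih =>
    calc (bchPow (n + 2) A).card
        ≤ ∑ i, ((bchPow (n + 1) A).image (bchMul (x i))).card :=
          (card_le_card (bchPow_succ_succ_subset h2 hcov n)).trans card_biUnion_le
      _ ≤ ∑ _i : ι, Fintype.card ι ^ n * A.card :=
          sum_le_sum fun i _ => card_image_le.trans ih
      _ = Fintype.card ι ^ (n + 1) * A.card := by
          rw [sum_const, card_univ, smul_eq_mul, pow_succ']
          ring

end BCHPow

theorem stmt8_general (L : Type*) [LieRing L] [LieAlgebra ℚ L] [DecidableEq L]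
    (h2 : ∀ x y z : L, ⁅x, ⁅y, z⁆⁆ = 0)
    (A : Finset L) (k : ℕ)
    (hone : (0 : L) ∈ A)
    (x : Fin k → L)
    (hcov : ∀ p ∈ Finset.image₂ bchMul A A, ∃ i : Fin k, ∃ a ∈ A, p = bchMul (x i) a) :
    (Finset.image₂ (· + ·) A A).card ≤ k ^ (8 - 1) * A.card ∧
      ∀ a ∈ A, ∀ b ∈ A, (2 : ℤ) • (a + b) ∈ bchPow 8 A := by
  have hmem : ∀ a ∈ A, ∀ b ∈ A, (2 : ℤ) • (a + b) ∈ bchPow 8 A := fun a ha b hb =>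
    bchPow_mono hone (by norm_num) (two_zsmul_add_mem_bchPow_four h2 ha hb)
  have : IsAddTorsionFree L := .of_module_rat L
  refine ⟨?_, hmem⟩
  calc (image₂ (· + ·) A A).card ≤ (bchPow 8 A).card := card_image₂_add_le_of_two_zsmul_mem hmem
    _ ≤ Fintype.card (Fin k) ^ 7 * A.card := card_bchPow_succ_le h2 hcov 7
    _ = k ^ (8 - 1) * A.card := by rw [Fintype.card_fin]

/-- Let 𝔫 be a 2-step nilpotent Lie algebra with BCH group `N`, and `A ⊆ N` a
finite symmetric set containing the identity with `AA` covered by `k` left translates of `A`.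
Then `|log A + log A| ≤ k^{L-1}|A|` with `L = 8` (`log` = identity of underlying sets): every
`a + b` with `a, b ∈ A` can be written as `(1/2)·log` of an element of `A^8`,
i.e. `2•(a+b) ∈ A^8`. -/
theorem stmt8 (L : Type*) [LieRing L] [LieAlgebra ℚ L] [DecidableEq L]
    (h2 : ∀ x y z : L, ⁅x, ⁅y, z⁆⁆ = 0)
    (A : Finset L) (k : ℕ)
    (hsym : ∀ a ∈ A, -a ∈ A) (hone : (0 : L) ∈ A)
    (x : Fin k → L)
    (hcov : ∀ p ∈ Finset.image₂ bchMul A A, ∃ i : Fin k, ∃ a ∈ A, p = bchMul (x i) a) :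
    (Finset.image₂ (· + ·) A A).card ≤ k ^ (8 - 1) * A.card ∧
      ∀ a ∈ A, ∀ b ∈ A, (2 : ℤ) • (a + b) ∈ bchPow 8 A :=
  stmt8_general L h2 A k hone x hcov
end

section
/- Let G be a group, A ⊆ G finite symmetric with 1 ∈ A and AA ⊆ ⋃_{i=1}^k x_i A. Then for any integers k_1, ..., k_l (possibly negative), the product set A^{k_1} A^{k_2} ⋯ A^{k_l} satisfies |A^{k_1} ⋯ A^{k_l}| ≤ k^{(|k_1|+⋯+|k_l|)-1} |A|, where A^{-m} := (A⁻¹)^m = A^m by symmetry. -/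
/-!
The product `A^{|k₁|} ⋯ A^{|k_l|}` is `A ^ n` with `n = ∑ |kᵢ|`. Writing the covering as
`A * A ⊆ F * A` with `#F ≤ K`, it propagates to `A ^ (n + 1) ⊆ F ^ n * A`, since
`A ^ (n + 2) = A ^ (n + 1) * A ⊆ F ^ n * (A * A) ⊆ F ^ (n + 1) * A`.
-/

open scoped Pointwise
open Finset

lemma List.prod_map_pow_eq_pow_sum {M : Type*} [Monoid M] (a : M) (l : List ℕ) :
    (l.map (a ^ ·)).prod = a ^ l.sum := by
  induction l with
  | nil => simp
  | cons n l ih => simp [ih, pow_add]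

lemma List.prod_ofFn_pow {M : Type*} [Monoid M] (a : M) {l : ℕ} (n : Fin l → ℕ) :
    (List.ofFn fun i => a ^ n i).prod = a ^ ∑ i, n i := by
  rw [← List.sum_ofFn, ← List.prod_map_pow_eq_pow_sum, List.map_ofFn]
  rfl

namespace Finset

variable {G : Type*} [Monoid G] [DecidableEq G] {A F : Finset G}

lemma pow_succ_subset_pow_mul_of_mul_self_subset (h : A * A ⊆ F * A) (n : ℕ) :
    A ^ (n + 1) ⊆ F ^ n * A := by
  induction n with
  | zero => simp
  | succ n ih =>
    calc A ^ (n + 1 + 1) = A ^ (n + 1) * A := pow_succ _ _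
      _ ⊆ F ^ n * A * A := mul_subset_mul_right ih
      _ = F ^ n * (A * A) := mul_assoc _ _ _
      _ ⊆ F ^ n * (F * A) := mul_subset_mul_left h
      _ = F ^ (n + 1) * A := by rw [← mul_assoc, pow_succ]

lemma card_pow_le_of_mul_self_subset (hA : A.Nonempty) (h : A * A ⊆ F * A) (n : ℕ) :
    #(A ^ n) ≤ #F ^ (n - 1) * #A := by
  cases n with
  | zero => simpa using hA.card_pos
  | succ n =>
    calc #(A ^ (n + 1)) ≤ #(F ^ n * A) :=
          card_le_card (pow_succ_subset_pow_mul_of_mul_self_subset h n)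
      _ ≤ #(F ^ n) * #A := card_mul_le
      _ ≤ #F ^ n * #A := Nat.mul_le_mul_right _ card_pow_le

end Finset

theorem stmt11_general (G : Type*) [Group G] [DecidableEq G] (A : Finset G) (K : ℕ)
    (hone : (1 : G) ∈ A)
    (x : Fin K → G) (hcov : (A * A : Finset G) ⊆ Finset.univ.biUnion fun i => x i • A)
    (l : ℕ) (k : Fin l → ℤ) :
    ((List.ofFn fun i : Fin l => A ^ (k i).natAbs).prod : Finset G).card ≤
      K ^ ((∑ i : Fin l, (k i).natAbs) - 1) * A.card := by
  set F := univ.image x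
  have hcovF : A * A ⊆ F * A := hcov.trans_eq <| by
    rw [← smul_eq_mul (a := F), ← biUnion_smul_finset, image_biUnion]
  have hF : #F ≤ K := card_image_le.trans_eq (card_fin K)
  rw [List.prod_ofFn_pow]
  calc _ ≤ #F ^ ((∑ i, (k i).natAbs) - 1) * #A :=
        card_pow_le_of_mul_self_subset ⟨1, hone⟩ hcovF _
    _ ≤ _ := by gcongr

/-- Let `G` be a group, `A ⊆ G` finite symmetric with `1 ∈ A` and
`AA ⊆ ⋃_{i=1}^K xᵢA`. Then for any integers `k₁, …, k_l` (possibly negative), the product set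
`A^{k₁} A^{k₂} ⋯ A^{k_l}` satisfies `|A^{k₁} ⋯ A^{k_l}| ≤ K^{(|k₁|+⋯+|k_l|)-1} |A|`, where
`A^{-m} := (A⁻¹)^m = A^m` by symmetry (so `A^{kᵢ} = A^{|kᵢ|}`) and `A^0 = {1}`. -/
theorem stmt11 (G : Type*) [Group G] [DecidableEq G] (A : Finset G) (K : ℕ)
    (hsym : ∀ a ∈ A, a⁻¹ ∈ A) (hone : (1 : G) ∈ A)
    (x : Fin K → G) (hcov : (A * A : Finset G) ⊆ Finset.univ.biUnion fun i => x i • A)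
    (l : ℕ) (k : Fin l → ℤ) :
    ((List.ofFn fun i : Fin l => A ^ (k i).natAbs).prod : Finset G).card ≤
      K ^ ((∑ i : Fin l, (k i).natAbs) - 1) * A.card :=
  stmt11_general G A K hone x hcov l k
end

section
/- Let 𝔫 be a 2-step nilpotent Lie algebra with group N given by the BCH product, and A ⊆ N finite symmetric with 1 ∈ A and AA ⊆ ⋃_{i=1}^k x_i A. Then |log(A) + log(A) + log(A)| ≤ k^{11}|A|: every element a + b + c with a, b, c ∈ A satisfies 2(a+b+c) ∈ log(A^{12}). -/
lemma two_zsmul_injective {M : Type*} [AddCommGroup M] [Module ℚ M] :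
    Function.Injective fun s : M => (2 : ℤ) • s := by
  intro s t hst
  have h : (2 : ℚ) • s = (2 : ℚ) • t := by
    simpa only [← Int.cast_smul_eq_zsmul ℚ, Int.cast_ofNat] using hst
  exact smul_right_injective M two_ne_zero h

namespace bchMul

variable {L : Type*} [LieRing L] [LieAlgebra ℚ L]

@[simp]
lemma zero_left (x : L) : bchMul 0 x = x := by simp [bchMul]

@[simp]
lemma zero_right (x : L) : bchMul x 0 = x := by simp [bchMul]

lemma assoc (h2 : ∀ x y z : L, ⁅x, ⁅y, z⁆⁆ = 0) (x y z : L) :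
    bchMul (bchMul x y) z = bchMul x (bchMul y z) := by
  have h2' : ∀ x y z : L, ⁅⁅y, z⁆, x⁆ = 0 := fun x y z => by rw [← lie_skew, h2, neg_zero]
  simp only [bchMul, add_lie, lie_add, smul_add, lie_smul, smul_lie, h2, h2', smul_zero, add_zero]
  module

lemma palindrome (h2 : ∀ x y z : L, ⁅x, ⁅y, z⁆⁆ = 0) (a b c : L) :
    bchMul a (bchMul b (bchMul c (bchMul c (bchMul b a)))) = (2 : ℤ) • (a + b + c) := by
  simp only [bchMul, lie_add, smul_add, lie_smul, h2, smul_zero, add_zero, lie_self, zero_add]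
  rw [← lie_skew b a, ← lie_skew c a, ← lie_skew c b, two_zsmul]
  module

end bchMul

namespace bchPow

variable {L : Type*} [LieRing L] [LieAlgebra ℚ L] [DecidableEq L] {A : Finset L}

lemma one (A : Finset L) : bchPow 1 A = A := by
  ext y
  simp [bchPow]

lemma bchMul_mem_succ {n : ℕ} {a p : L} (ha : a ∈ A) (hp : p ∈ bchPow n A) :
    bchMul a p ∈ bchPow (n + 1) A :=
  Finset.mem_image₂_of_mem ha hp

lemma mono (hA : (0 : L) ∈ A) : Monotone fun n => bchPow n A :=
  monotone_nat_of_le_succ fun n p hp => by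
    simpa using bchMul_mem_succ hA hp

lemma two_zsmul_add_add_mem (h2 : ∀ x y z : L, ⁅x, ⁅y, z⁆⁆ = 0) (hA : (0 : L) ∈ A)
    {a b c : L} (ha : a ∈ A) (hb : b ∈ A) (hc : c ∈ A) :
    (2 : ℤ) • (a + b + c) ∈ bchPow 12 A := by
  refine mono hA (by norm_num : 6 ≤ 12) ?_
  rw [← bchMul.palindrome h2]
  refine bchMul_mem_succ ha (bchMul_mem_succ hb (bchMul_mem_succ hc
    (bchMul_mem_succ hc (bchMul_mem_succ hb ?_))))
  rwa [one]

section Covering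

variable (h2 : ∀ x y z : L, ⁅x, ⁅y, z⁆⁆ = 0) {k : ℕ} {x : Fin k → L}
  (hcov : ∀ p ∈ Finset.image₂ bchMul A A, ∃ i : Fin k, ∃ a ∈ A, p = bchMul (x i) a)
include h2 hcov

lemma succ_succ_subset (n : ℕ) :
    bchPow (n + 2) A ⊆ Finset.univ.biUnion fun i => (bchPow (n + 1) A).image (bchMul (x i)) := by
  intro y hy
  obtain ⟨a, ha, p, hp, rfl⟩ := Finset.mem_image₂.mp hy
  obtain ⟨a', ha', q, hq, rfl⟩ := Finset.mem_image₂.mp hp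
  obtain ⟨i, a'', ha'', hcov_i⟩ := hcov (bchMul a a') (Finset.mem_image₂_of_mem ha ha')
  refine Finset.mem_biUnion.mpr ⟨i, Finset.mem_univ i,
    Finset.mem_image.mpr ⟨bchMul a'' q, bchMul_mem_succ ha'' hq, ?_⟩⟩
  rw [← bchMul.assoc h2, ← hcov_i, bchMul.assoc h2]

lemma card_succ_le (n : ℕ) : (bchPow (n + 1) A).card ≤ k ^ n * A.card := by
  induction n with
  | zero => simp [one]
  | succ n ih =>
    calc (bchPow (n + 2) A).card
        ≤ (Finset.univ.biUnion fun i => (bchPow (n + 1) A).image (bchMul (x i))).card :=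
          Finset.card_le_card (succ_succ_subset h2 hcov n)
      _ ≤ Finset.univ.card * (bchPow (n + 1) A).card :=
          Finset.card_biUnion_le_card_mul _ _ _ fun _ _ => Finset.card_image_le
      _ ≤ k * (k ^ n * A.card) := by
          rw [Finset.card_univ, Fintype.card_fin]
          exact Nat.mul_le_mul_left k ih
      _ = k ^ (n + 1) * A.card := by ring

end Covering

end bchPow

theorem stmt18_general (L : Type*) [LieRing L] [LieAlgebra ℚ L] [DecidableEq L]
    (h2 : ∀ x y z : L, ⁅x, ⁅y, z⁆⁆ = 0)
    (A : Finset L) (k : ℕ)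
    (hone : (0 : L) ∈ A)
    (x : Fin k → L)
    (hcov : ∀ p ∈ Finset.image₂ bchMul A A, ∃ i : Fin k, ∃ a ∈ A, p = bchMul (x i) a) :
    (Finset.image₂ (· + ·) A (Finset.image₂ (· + ·) A A)).card ≤ k ^ 11 * A.card ∧
      ∀ a ∈ A, ∀ b ∈ A, ∀ c ∈ A, (2 : ℤ) • (a + b + c) ∈ bchPow 12 A := by
  have hmem : ∀ a ∈ A, ∀ b ∈ A, ∀ c ∈ A, (2 : ℤ) • (a + b + c) ∈ bchPow 12 A :=
    fun a ha b hb c hc => bchPow.two_zsmul_add_add_mem h2 hone ha hb hc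
  refine ⟨?_, hmem⟩
  set T := Finset.image₂ (· + ·) A (Finset.image₂ (· + ·) A A)
  have hT : T.image (fun s => (2 : ℤ) • s) ⊆ bchPow 12 A := by
    simp only [T, Finset.subset_iff, Finset.mem_image, Finset.mem_image₂]
    rintro _ ⟨_, ⟨a, ha, _, ⟨b, hb, c, hc, rfl⟩, rfl⟩, rfl⟩
    simpa only [add_assoc] using hmem a ha b hb c hc
  calc T.card = (T.image fun s => (2 : ℤ) • s).card :=
        (Finset.card_image_of_injective T two_zsmul_injective).symm
    _ ≤ (bchPow 12 A).card := Finset.card_le_card hT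
    _ ≤ k ^ 11 * A.card := bchPow.card_succ_le h2 hcov 11

/-- Let 𝔫 be a 2-step nilpotent Lie algebra with BCH group `N`, and `A ⊆ N`
finite symmetric with `1 ∈ A` and `AA ⊆ ⋃_{i=1}^k xᵢA`. Then
`|log A + log A + log A| ≤ k^{11}|A|` (`log` = identity): every element `a + b + c` with
`a, b, c ∈ A` satisfies `2(a+b+c) ∈ log (A^{12})`. -/
theorem stmt18 (L : Type*) [LieRing L] [LieAlgebra ℚ L] [DecidableEq L]
    (h2 : ∀ x y z : L, ⁅x, ⁅y, z⁆⁆ = 0)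
    (A : Finset L) (k : ℕ)
    (hsym : ∀ a ∈ A, -a ∈ A) (hone : (0 : L) ∈ A)
    (x : Fin k → L)
    (hcov : ∀ p ∈ Finset.image₂ bchMul A A, ∃ i : Fin k, ∃ a ∈ A, p = bchMul (x i) a) :
    (Finset.image₂ (· + ·) A (Finset.image₂ (· + ·) A A)).card ≤ k ^ 11 * A.card ∧
      ∀ a ∈ A, ∀ b ∈ A, ∀ c ∈ A, (2 : ℤ) • (a + b + c) ∈ bchPow 12 A :=
  stmt18_general L h2 A k hone x hcov
end
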